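/- Let p ≥ 2 be an integer and let A ∈ GLₙ(ℂ(z)) be a matrix of rational functions whose associated Mahler system φ_p(Y) = AY is regular singular at 0, i.e. there exists an n×n matrix T of germs of functions meromorphic at 0 with determinant not identically zero such that T(z^p)⁻¹·A(z)·T(z) is regular at 0. Then there exist an n×n matrix F₀ of functions meromorphic on the open unit disk D(0,1) with determinant not identically zero, and a constant matrix A₀ ∈ GLₙ(ℂ), such that A(z)·F₀(z) = F₀(z^p)·A₀ as meromorphic matrices on D(0,1). -/

import Mathlib

open Metric Filter Topology

noncomputable def ratEval (r : RatFunc ℂ) (z : ℂ) : ℂ := r.eval (RingHom.id ℂ) z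

/-!
Near `0`, the gauge `Ψ` with `B(z) Ψ(z) = Ψ(z^p) B(0)` is the limit of
`Ψ_{N+1}(z) = B(z)⁻¹ Ψ_N(z^p) B(0)`, `Ψ_0 = 1`: the first increment is `O(z)`, and the iteration
turns `z` into `z^(p^N)`, so with `K` bounding `‖B(z)⁻¹‖ ‖B(0)‖` the `N`-th increment is
`O(K^N |z|^(p^N))` and the iteration converges uniformly on a small disk. Then `F = T Ψ` solves `A(z) F(z) = F(z^p) B(0)` on a punctured disk of
radius `r`. Read as `F(z) = A(z)⁻¹ F(z^p) B(0)`, the equation itself extends `F` to the unit disk,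
since every orbit of `z ↦ z^p` in the unit disk enters the disk of radius `r`. The extension is
meromorphic, and the equation holds off the points whose orbit meets a pole of `A` or `A⁻¹`. These
points do not accumulate inside the unit disk, so the equation passes, by continuity, to every point
where both sides are continuous.
-/

lemma norm_pow_le_norm {z : ℂ} {p : ℕ} (hp : p ≠ 0) (hz : ‖z‖ ≤ 1) : ‖z ^ p‖ ≤ ‖z‖ := by
  rw [norm_pow]
  exact pow_le_of_le_one (norm_nonneg z) hz hp

lemma pow_pow_le_pow_succ {x : ℝ} {p : ℕ} (hx₀ : 0 ≤ x) (hx₁ : x ≤ 1) (hp : 2 ≤ p) (N : ℕ) :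
    x ^ p ^ N ≤ x ^ (N + 1) :=
  pow_le_pow_of_le_one hx₀ hx₁ (Nat.lt_two_pow_self.trans_le (Nat.pow_le_pow_left hp N))

lemma exists_norm_pow_pow_lt {z : ℂ} {p : ℕ} {r : ℝ} (hp : 2 ≤ p) (hz : ‖z‖ < 1) (hr : 0 < r) :
    ∃ K, ‖z ^ p ^ K‖ < r := by
  obtain ⟨K, hK⟩ := ((tendsto_pow_atTop_nhds_zero_of_lt_one (norm_nonneg z) hz).eventually
    (gt_mem_nhds hr)).exists
  refine ⟨K, ?_⟩
  rw [norm_pow]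
  calc ‖z‖ ^ p ^ K ≤ ‖z‖ ^ (K + 1) := pow_pow_le_pow_succ (norm_nonneg z) hz.le hp K
    _ ≤ ‖z‖ ^ K := pow_le_pow_of_le_one (norm_nonneg z) hz.le K.le_succ
    _ < r := hK

lemma norm_pow_pow_lt_of_le {z : ℂ} {p : ℕ} {r : ℝ} (hp : p ≠ 0) (hr : r ≤ 1) {K K' : ℕ}
    (hKK' : K ≤ K') (hK : ‖z ^ p ^ K‖ < r) : ‖z ^ p ^ K'‖ < r := by
  induction K', hKK' using Nat.le_induction with
  | base => exact hK
  | succ K' _ ih =>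
    rw [pow_succ, pow_mul]
    exact (norm_pow_le_norm hp (ih.le.trans hr)).trans_lt ih

lemma tendstoUniformlyOn_of_norm_succ_sub_le {β E : Type*} [NormedAddCommGroup E] [CompleteSpace E]
    {f : ℕ → β → E} {u : ℕ → ℝ} {s : Set β} (hu : Summable u)
    (hf : ∀ N, ∀ x ∈ s, ‖f (N + 1) x - f N x‖ ≤ u N) :
    TendstoUniformlyOn f (fun x => f 0 x + ∑' N, (f (N + 1) x - f N x)) atTop s := by
  have hconst : TendstoUniformlyOn (fun _ : ℕ => f 0) (f 0) atTop s :=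
    fun _ hv => Eventually.of_forall fun _ _ _ => refl_mem_uniformity hv
  refine (hconst.add (tendstoUniformlyOn_tsum_nat hu hf)).congr (Eventually.of_forall ?_)
  intro N x _
  simp only [Pi.add_apply, Finset.sum_range_sub (fun k => f k x)]
  abel

section MahlerIteration

variable {𝔸 : Type*} (p : ℕ) (M : ℂ → 𝔸) (C : 𝔸) (F : ℂ → 𝔸)

def mahlerIter [Mul 𝔸] : ℕ → ℂ → 𝔸
  | 0 => F
  | N + 1 => fun z => M z * mahlerIter N (z ^ p) * C

@[simp] lemma mahlerIter_zero [Mul 𝔸] : mahlerIter p M C F 0 = F := rfl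

lemma mahlerIter_succ [Mul 𝔸] (N : ℕ) (z : ℂ) :
    mahlerIter p M C F (N + 1) z = M z * mahlerIter p M C F N (z ^ p) * C := rfl

lemma mahlerIter_succ_succ_sub [Ring 𝔸] (N : ℕ) (z : ℂ) :
    mahlerIter p M C F (N + 1 + 1) z - mahlerIter p M C F (N + 1) z =
      M z * (mahlerIter p M C F (N + 1) (z ^ p) - mahlerIter p M C F N (z ^ p)) * C := by
  simp only [mahlerIter_succ _ _ _ _ (N + 1), mahlerIter_succ _ _ _ _ N, mul_sub, sub_mul]

lemma mahlerIter_one_apply_zero [Monoid 𝔸] (hp : p ≠ 0) (h : M 0 * C = 1) (N : ℕ) :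
    mahlerIter p M C 1 N 0 = 1 := by
  induction N with
  | zero => rfl
  | succ N ih => rw [mahlerIter_succ, zero_pow hp, ih, mul_one, h]

lemma eq_mul_comp_pow_mul_of_tendsto_mahlerIter [Ring 𝔸] [TopologicalSpace 𝔸]
    [IsTopologicalRing 𝔸] [T2Space 𝔸] {Ψ : ℂ → 𝔸} {z : ℂ}
    (hz : Tendsto (fun N => mahlerIter p M C F N z) atTop (𝓝 (Ψ z)))
    (hzp : Tendsto (fun N => mahlerIter p M C F N (z ^ p)) atTop (𝓝 (Ψ (z ^ p)))) :
    Ψ z = M z * Ψ (z ^ p) * C :=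
  tendsto_nhds_unique ((tendsto_add_atTop_iff_nat 1).2 hz) ((hzp.const_mul (M z)).mul_const C)

variable {p M C F} [NormedRing 𝔸] {r K c : ℝ}

lemma norm_mahlerIter_succ_sub_le (hp : p ≠ 0) (hr : r ≤ 1) (hK : 0 ≤ K)
    (hMC : ∀ z ∈ closedBall (0 : ℂ) r, ‖M z‖ * ‖C‖ ≤ K)
    (h₀ : ∀ z ∈ closedBall (0 : ℂ) r, ‖mahlerIter p M C F 1 z - F z‖ ≤ c * ‖z‖) (N : ℕ) :
    ∀ z ∈ closedBall (0 : ℂ) r,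
      ‖mahlerIter p M C F (N + 1) z - mahlerIter p M C F N z‖ ≤ c * K ^ N * ‖z‖ ^ p ^ N := by
  induction N with
  | zero => simpa using h₀
  | succ N ih =>
    intro z hz
    have hzp : z ^ p ∈ closedBall (0 : ℂ) r := by
      rw [mem_closedBall_zero_iff] at hz ⊢
      exact (norm_pow_le_norm hp (hz.trans hr)).trans hz
    calc _ = ‖M z * (mahlerIter p M C F (N + 1) (z ^ p) - mahlerIter p M C F N (z ^ p)) * C‖ := by
          rw [mahlerIter_succ_succ_sub]
      _ ≤ ‖M z‖ * ‖C‖ * ‖mahlerIter p M C F (N + 1) (z ^ p) - mahlerIter p M C F N (z ^ p)‖ :=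
          norm_mul₃_le.trans_eq (by ring)
      _ ≤ K * (c * K ^ N * ‖z ^ p‖ ^ p ^ N) := by gcongr; exacts [hMC z hz, ih _ hzp]
      _ = c * K ^ (N + 1) * ‖z‖ ^ p ^ (N + 1) := by rw [norm_pow, ← pow_mul, ← pow_succ']; ring

lemma exists_tendstoUniformlyOn_mahlerIter [CompleteSpace 𝔸] (hp : 2 ≤ p) (hr₀ : 0 ≤ r)
    (hr : r ≤ 1) (hK : 0 ≤ K) (hKr : K * r ≤ 1 / 2)
    (hMC : ∀ z ∈ closedBall (0 : ℂ) r, ‖M z‖ * ‖C‖ ≤ K)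
    (h₀ : ∀ z ∈ closedBall (0 : ℂ) r, ‖mahlerIter p M C F 1 z - F z‖ ≤ c * ‖z‖) :
    ∃ Ψ, TendstoUniformlyOn (mahlerIter p M C F) Ψ atTop (closedBall 0 r) := by
  refine ⟨_, tendstoUniformlyOn_of_norm_succ_sub_le
    (summable_geometric_two.mul_left (|c| * r)) fun N z hz => ?_⟩
  have hz' : ‖z‖ ≤ r := mem_closedBall_zero_iff.mp hz
  calc _ ≤ c * K ^ N * ‖z‖ ^ p ^ N := norm_mahlerIter_succ_sub_le (by omega) hr hK hMC h₀ N z hz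
    _ ≤ |c| * K ^ N * r ^ (N + 1) := by
        gcongr
        · exact le_abs_self c
        · exact (pow_le_pow_left₀ (norm_nonneg z) hz' _).trans (pow_pow_le_pow_succ hr₀ hr hp N)
    _ = |c| * r * (K * r) ^ N := by ring
    _ ≤ |c| * r * (1 / 2) ^ N := by gcongr

lemma differentiableOn_mahlerIter [NormedAlgebra ℂ 𝔸] (hp : p ≠ 0) (hr : r ≤ 1)
    (hM : DifferentiableOn ℂ M (ball 0 r)) (hF : DifferentiableOn ℂ F (ball 0 r)) (N : ℕ) :
    DifferentiableOn ℂ (mahlerIter p M C F N) (ball 0 r) := by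
  induction N with
  | zero => exact hF
  | succ N ih =>
    have hmaps : Set.MapsTo (· ^ p) (ball (0 : ℂ) r) (ball 0 r) := fun z hz => by
      rw [mem_ball_zero_iff] at hz ⊢
      exact (norm_pow_le_norm hp (hz.le.trans hr)).trans_lt hz
    exact (hM.mul (ih.comp (differentiableOn_pow p) hmaps)).mul_const C

end MahlerIteration

lemma exists_radius_of_eventually {P : ℂ → Prop} (h : ∀ᶠ z in 𝓝 (0 : ℂ), P z) {K : ℝ}
    (hK : 0 ≤ K) : ∃ r > 0, r ≤ 1 ∧ K * r ≤ 1 / 2 ∧ ∀ z ∈ closedBall (0 : ℂ) r, P z := by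
  obtain ⟨ε, hε, hP⟩ := nhds_basis_closedBall.eventually_iff.mp h
  have hK' : K * (1 / (2 * K + 2)) ≤ 1 / 2 := by
    rw [mul_one_div, div_le_iff₀ (by positivity)]
    linarith
  refine ⟨min ε (1 / (2 * K + 2)), by positivity, ?_, ?_,
    fun z hz => hP (closedBall_subset_closedBall (min_le_left _ _) hz)⟩
  · exact (min_le_right _ _).trans (by rw [div_le_one (by positivity)]; linarith)
  · exact (mul_le_mul_of_nonneg_left (min_le_right _ _) hK).trans hK'

section Gauge

variable {𝔸 : Type*} [NormedRing 𝔸] [NormedAlgebra ℂ 𝔸] [CompleteSpace 𝔸] {B : ℂ → 𝔸}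

lemma AnalyticAt.ring_inverse {x : ℂ} (hB : AnalyticAt ℂ B x) (hx : IsUnit (B x)) :
    AnalyticAt ℂ (fun z => Ring.inverse (B z)) x :=
  (analyticAt_inverse hx.unit).comp_of_eq hB hx.unit_spec

lemma eventually_inverse_bounds (hB : AnalyticAt ℂ B 0) (hB0 : IsUnit (B 0)) :
    ∃ K ≥ 0, ∃ c, ∀ᶠ z in 𝓝 (0 : ℂ), AnalyticAt ℂ (fun z => Ring.inverse (B z)) z ∧
      B z * Ring.inverse (B z) = 1 ∧ ‖Ring.inverse (B z)‖ * ‖B 0‖ ≤ K ∧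
      ‖Ring.inverse (B z) * B 0 - 1‖ ≤ c * ‖z‖ := by
  have hM := hB.ring_inverse hB0
  obtain ⟨c, hc⟩ := (hM.differentiableAt.mul_const (B 0)).isBigO_sub.bound
  refine ⟨‖Ring.inverse (B 0)‖ * ‖B 0‖ + 1, by positivity, c, hM.eventually_analyticAt.and ?_⟩
  have hunit : ∀ᶠ z in 𝓝 (0 : ℂ), IsUnit (B z) :=
    hB.continuousAt.eventually_mem (Units.isOpen.mem_nhds hB0)
  have hbound : ∀ᶠ z in 𝓝 (0 : ℂ),
      ‖Ring.inverse (B z)‖ * ‖B 0‖ < ‖Ring.inverse (B 0)‖ * ‖B 0‖ + 1 :=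
    (hM.continuousAt.norm.mul_const _).eventually_lt continuousAt_const (lt_add_one _)
  filter_upwards [hunit, hbound, hc] with z hzu hzK hzc
  refine ⟨Ring.mul_inverse_cancel _ hzu, hzK.le, ?_⟩
  simpa [Ring.inverse_mul_cancel _ hB0] using hzc

theorem exists_gauge_to_constant {p : ℕ} (hp : 2 ≤ p) (hB : AnalyticAt ℂ B 0)
    (hB0 : IsUnit (B 0)) : ∃ r > 0, ∃ Ψ : ℂ → 𝔸, AnalyticOnNhd ℂ Ψ (ball 0 r) ∧ Ψ 0 = 1 ∧
      ∀ z ∈ ball 0 r, B z * Ψ z = Ψ (z ^ p) * B 0 := by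
  set M := fun z => Ring.inverse (B z)
  obtain ⟨K, hK, c, hev⟩ := eventually_inverse_bounds hB hB0
  obtain ⟨r, hr, hr1, hKr, hloc⟩ := exists_radius_of_eventually hev hK
  simp only [imp_and, forall_and] at hloc
  obtain ⟨hMan, hBM, hMC, hM1⟩ := hloc
  obtain ⟨Ψ, hΨ⟩ := exists_tendstoUniformlyOn_mahlerIter (M := M) (C := B 0) (F := 1) (c := c)
    hp hr.le hr1 hK hKr hMC fun z hz => by simpa [mahlerIter_succ] using hM1 z hz
  have hmem : ∀ z ∈ closedBall (0 : ℂ) r, z ^ p ∈ closedBall (0 : ℂ) r := fun z hz => by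
    rw [mem_closedBall_zero_iff] at hz ⊢
    exact (norm_pow_le_norm (by omega) (hz.trans hr1)).trans hz
  have hlim : ∀ z ∈ closedBall (0 : ℂ) r, Ψ z = M z * Ψ (z ^ p) * B 0 := fun z hz =>
    eq_mul_comp_pow_mul_of_tendsto_mahlerIter p M _ _ (hΨ.tendsto_at hz)
      (hΨ.tendsto_at (hmem z hz))
  refine ⟨r, hr, Ψ, ?_, ?_, fun z hz => ?_⟩
  · have hMd : DifferentiableOn ℂ M (ball 0 r) := fun z hz =>
      (hMan z (ball_subset_closedBall hz)).differentiableAt.differentiableWithinAt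
    exact ((hΨ.tendstoLocallyUniformlyOn.mono ball_subset_closedBall).differentiableOn
      (Eventually.of_forall (differentiableOn_mahlerIter (by omega) hr1 hMd
        (differentiableOn_const 1))) isOpen_ball).analyticOnNhd isOpen_ball
  · have h0 := hΨ.tendsto_at (mem_closedBall_self hr.le)
    simp only [mahlerIter_one_apply_zero p M _ (by omega) (Ring.inverse_mul_cancel _ hB0)] at h0
    exact tendsto_nhds_unique h0 tendsto_const_nhds
  · rw [hlim z (ball_subset_closedBall hz), ← mul_assoc, ← mul_assoc,
      hBM z (ball_subset_closedBall hz), one_mul]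

end Gauge

section MatrixGauge

variable {ι : Type*} [Fintype ι] [DecidableEq ι]

attribute [local instance] Matrix.linftyOpNormedAddCommGroup Matrix.linftyOpNormedSpace
  Matrix.linftyOpNormedRing Matrix.linftyOpNormedAlgebra

lemma analyticAt_matrix_iff {f : ℂ → Matrix ι ι ℂ} {x : ℂ} :
    AnalyticAt ℂ f x ↔ ∀ i j, AnalyticAt ℂ (fun z => f z i j) x := by
  refine ⟨fun h i j =>
    ((Matrix.entryLinearMap ℂ ℂ i j).toContinuousLinearMap.analyticAt _).comp h, fun h => ?_⟩
  have hsum : f = fun z => ∑ i, ∑ j, f z i j • Matrix.single i j (1 : ℂ) := by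
    ext z : 1
    simpa using Matrix.matrix_eq_sum_single (f z)
  rw [hsum]
  exact Finset.analyticAt_fun_sum _ fun i _ => Finset.analyticAt_fun_sum _ fun j _ =>
    (h i j).smul analyticAt_const

theorem exists_matrix_gauge_to_constant {p : ℕ} (hp : 2 ≤ p) {B : ℂ → Matrix ι ι ℂ}
    (hB : ∀ i j, AnalyticAt ℂ (fun z => B z i j) 0) (hB0 : IsUnit (B 0).det) :
    ∃ r > 0, ∃ Ψ : ℂ → Matrix ι ι ℂ,
      (∀ x ∈ ball (0 : ℂ) r, ∀ i j, AnalyticAt ℂ (fun z => Ψ z i j) x) ∧ Ψ 0 = 1 ∧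
      ∀ z ∈ ball 0 r, B z * Ψ z = Ψ (z ^ p) * B 0 := by
  obtain ⟨r, hr, Ψ, hΨ, hΨ0, heq⟩ := exists_gauge_to_constant hp (analyticAt_matrix_iff.2 hB)
    ((Matrix.isUnit_iff_isUnit_det _).2 hB0)
  exact ⟨r, hr, Ψ, fun x hx => analyticAt_matrix_iff.1 (hΨ x hx), hΨ0, heq⟩

end MatrixGauge

lemma continuousAt_matrix {ι : Type*} {f : ℂ → Matrix ι ι ℂ} {x : ℂ}
    (hf : ∀ i j, ContinuousAt (fun z => f z i j) x) : ContinuousAt f x :=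
  continuousAt_pi.2 fun i => continuousAt_pi.2 (hf i)

section MatrixFunctions

variable {ι : Type*} [Fintype ι] {f g : ℂ → Matrix ι ι ℂ} {x : ℂ}

lemma analyticAt_matrix_mul_apply (hf : ∀ i j, AnalyticAt ℂ (fun z => f z i j) x)
    (hg : ∀ i j, AnalyticAt ℂ (fun z => g z i j) x) (i j : ι) :
    AnalyticAt ℂ (fun z => (f z * g z) i j) x := by
  simp only [Matrix.mul_apply]
  exact Finset.analyticAt_fun_sum _ fun k _ => (hf i k).mul (hg k j)

lemma meromorphicAt_matrix_mul_apply (hf : ∀ i j, MeromorphicAt (fun z => f z i j) x)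
    (hg : ∀ i j, MeromorphicAt (fun z => g z i j) x) (i j : ι) :
    MeromorphicAt (fun z => (f z * g z) i j) x := by
  simp only [Matrix.mul_apply]
  exact MeromorphicAt.fun_sum fun k _ => (hf i k).mul (hg k j)

end MatrixFunctions

section RatEval

open Polynomial

lemma meromorphicAt_ratEval (r : RatFunc ℂ) (x : ℂ) : MeromorphicAt (ratEval r) x :=
  ((AnalyticOnNhd.eval_polynomial r.num x trivial).meromorphicAt).div
    (AnalyticOnNhd.eval_polynomial r.denom x trivial).meromorphicAt

lemma continuousAt_ratEval {r : RatFunc ℂ} {z : ℂ} (hz : r.denom.eval z ≠ 0) :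
    ContinuousAt (ratEval r) z :=
  r.num.continuous.continuousAt.div r.denom.continuous.continuousAt hz

lemma denom_sum_eval_ne_zero {α : Type*} (s : Finset α) {f : α → RatFunc ℂ} {z : ℂ}
    (hf : ∀ a ∈ s, (f a).denom.eval z ≠ 0) : (∑ a ∈ s, f a).denom.eval z ≠ 0 := by
  classical
  induction s using Finset.induction_on with
  | empty => simp
  | insert a s ha ih =>
    rw [Finset.sum_insert ha]
    refine ne_zero_of_dvd_ne_zero ?_ (eval_dvd (RatFunc.denom_add_dvd _ _))
    rw [eval_mul]
    exact mul_ne_zero (hf a (s.mem_insert_self a)) (ih fun b hb => hf b (s.mem_insert_of_mem hb))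

lemma ratEval_sum {α : Type*} (s : Finset α) {f : α → RatFunc ℂ} {z : ℂ}
    (hf : ∀ a ∈ s, (f a).denom.eval z ≠ 0) :
    ratEval (∑ a ∈ s, f a) z = ∑ a ∈ s, ratEval (f a) z := by
  classical
  induction s using Finset.induction_on with
  | empty => simp [ratEval]
  | insert a s ha ih =>
    have hs : ∀ b ∈ s, (f b).denom.eval z ≠ 0 := fun b hb => hf b (s.mem_insert_of_mem hb)
    rw [Finset.sum_insert ha, Finset.sum_insert ha, ← ih hs]
    exact RatFunc.eval_add _ _ (hf a (s.mem_insert_self a)) (denom_sum_eval_ne_zero s hs)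

lemma map_ratEval_mul {l m o : Type*} [Fintype m] {P : Matrix l m (RatFunc ℂ)}
    {Q : Matrix m o (RatFunc ℂ)} {z : ℂ} (hP : ∀ i j, (P i j).denom.eval z ≠ 0)
    (hQ : ∀ i j, (Q i j).denom.eval z ≠ 0) :
    (P * Q).map (ratEval · z) = P.map (ratEval · z) * Q.map (ratEval · z) := by
  have hPQ : ∀ i j k, (P i k * Q k j).denom.eval z ≠ 0 := fun i j k =>
    ne_zero_of_dvd_ne_zero (by rw [eval_mul]; exact mul_ne_zero (hP i k) (hQ k j))
      (eval_dvd (RatFunc.denom_mul_dvd _ _))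
  ext i j
  simp only [Matrix.map_apply, Matrix.mul_apply]
  rw [ratEval_sum _ fun k _ => hPQ i j k]
  exact Finset.sum_congr rfl fun k _ => RatFunc.eval_mul _ _ (hP i k) (hQ k j)

lemma map_ratEval_inv_mul {ι : Type*} [Fintype ι] [DecidableEq ι] {A : Matrix ι ι (RatFunc ℂ)}
    (hA : IsUnit A.det) {z : ℂ} (hz : ∀ i j, (A i j).denom.eval z ≠ 0)
    (hz' : ∀ i j, (A⁻¹ i j).denom.eval z ≠ 0) :
    A⁻¹.map (ratEval · z) * A.map (ratEval · z) = 1 := by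
  rw [← map_ratEval_mul hz' hz, Matrix.nonsing_inv_mul A hA]
  exact Matrix.map_one _ (by simp [ratEval]) (by simp [ratEval])

end RatEval

section Discreteness

open Polynomial

lemma Polynomial.eventually_eval_ne_zero_nhdsNE {K : Type*} [Field K] [TopologicalSpace K]
    [T1Space K] {q : K[X]} (hq : q ≠ 0) (x : K) : ∀ᶠ y in 𝓝[≠] x, q.eval y ≠ 0 :=
  nhdsNE_le_cofinite x (finite_setOfPred_isRoot hq).eventually_cofinite_notMem

lemma eventually_forall_eval_pow_pow_ne_zero {p : ℕ} (hp : 2 ≤ p) {q : ℂ[X]} (hq : q ≠ 0)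
    {x : ℂ} (hx : ‖x‖ < 1) : ∀ᶠ w in 𝓝[≠] x, ∀ k, q.eval (w ^ p ^ k) ≠ 0 := by
  obtain ⟨ε, hε, hqε⟩ := Metric.eventually_nhds_iff_ball.1
    (eventually_nhdsWithin_iff.1 (eventually_eval_ne_zero_nhdsNE hq 0))
  obtain ⟨ρ, hxρ, hρ⟩ := exists_between hx
  have hρ₀ : 0 ≤ ρ := (norm_nonneg x).trans hxρ.le
  obtain ⟨K₀, hK₀⟩ := ((tendsto_pow_atTop_nhds_zero_of_lt_one hρ₀ hρ).eventually
    (gt_mem_nhds hε)).exists_forall_of_atTop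
  have hsmall : ∀ᶠ w in 𝓝[≠] x, ‖w‖ < ρ := nhdsWithin_le_nhds
    (continuous_norm.continuousAt.eventually_lt continuousAt_const hxρ)
  have hne : ∀ᶠ w in 𝓝[≠] x, w ≠ 0 := by simpa using eventually_eval_ne_zero_nhdsNE X_ne_zero x
  have hfirst : ∀ᶠ w in 𝓝[≠] x, ∀ k ∈ Finset.range K₀, q.eval (w ^ p ^ k) ≠ 0 :=
    (eventually_all_finset _).2 fun k _ => by
      simpa [expand_eval] using
        eventually_eval_ne_zero_nhdsNE ((expand_eq_zero (by positivity)).not.2 hq) x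
  filter_upwards [hsmall, hne, hfirst] with w hwρ hw0 hwK k
  by_cases hk : k < K₀
  · exact hwK k (Finset.mem_range.2 hk)
  -- beyond `K₀` the orbit point is nonzero and closer to `0` than any nonzero root of `q`
  · refine hqε _ (mem_ball_zero_iff.2 ?_) (pow_ne_zero _ hw0)
    calc ‖w ^ p ^ k‖ ≤ ρ ^ (k + 1) := by
          rw [norm_pow]
          exact (pow_le_pow_left₀ (norm_nonneg w) hwρ.le _).trans
            (pow_pow_le_pow_succ hρ₀ hρ.le hp k)
      _ ≤ ρ ^ k := pow_le_pow_of_le_one hρ₀ hρ.le k.le_succ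
      _ < ε := hK₀ k (by omega)

end Discreteness

section Extension

variable {𝔸 : Type*} [Mul 𝔸] {p : ℕ} {M : ℂ → 𝔸} {C : 𝔸} {F : ℂ → 𝔸} {r : ℝ} {S : Set ℂ}

-- `sInf ∅ = 0` in `ℕ`: the index is `0` when the orbit never enters the ball.
noncomputable def escapeIndex (p : ℕ) (r : ℝ) (z : ℂ) : ℕ := sInf {K | ‖z ^ p ^ K‖ < r}

noncomputable def mahlerExtension (p : ℕ) (r : ℝ) (M : ℂ → 𝔸) (C : 𝔸) (F : ℂ → 𝔸) (z : ℂ) : 𝔸 :=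
  mahlerIter p M C F (escapeIndex p r z) z

lemma mahlerIter_eq_mahlerIter_succ (hS : ∀ z ∈ S, z ^ p ∈ S)
    (hF : ∀ z ∈ S, ‖z‖ < r → F z = M z * F (z ^ p) * C) (K : ℕ) :
    ∀ z ∈ S, ‖z ^ p ^ K‖ < r → mahlerIter p M C F K z = mahlerIter p M C F (K + 1) z := by
  induction K with
  | zero => exact fun z hz hzr => hF z hz (by simpa using hzr)
  | succ K ih =>
    intro z hz hzr
    rw [mahlerIter_succ _ _ _ _ K, mahlerIter_succ _ _ _ _ (K + 1),
      ih (z ^ p) (hS z hz) (by rwa [← pow_mul, ← pow_succ'])]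

lemma mahlerIter_eq_of_le (hp : p ≠ 0) (hr : r ≤ 1) (hS : ∀ z ∈ S, z ^ p ∈ S)
    (hF : ∀ z ∈ S, ‖z‖ < r → F z = M z * F (z ^ p) * C) {K K' : ℕ} (hKK' : K ≤ K') {z : ℂ}
    (hz : z ∈ S) (hzr : ‖z ^ p ^ K‖ < r) :
    mahlerIter p M C F K z = mahlerIter p M C F K' z := by
  induction K', hKK' using Nat.le_induction with
  | base => rfl
  | succ K' hK' ih =>
    rw [ih, mahlerIter_eq_mahlerIter_succ hS hF K' z hz (norm_pow_pow_lt_of_le hp hr hK' hzr)]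

lemma mahlerExtension_eq_mahlerIter (hp : p ≠ 0) (hr : r ≤ 1) (hS : ∀ z ∈ S, z ^ p ∈ S)
    (hF : ∀ z ∈ S, ‖z‖ < r → F z = M z * F (z ^ p) * C) {K : ℕ} {z : ℂ} (hz : z ∈ S)
    (hzr : ‖z ^ p ^ K‖ < r) : mahlerExtension p r M C F z = mahlerIter p M C F K z :=
  mahlerIter_eq_of_le hp hr hS hF (Nat.sInf_le hzr) hz
    (Nat.sInf_mem (s := {K | ‖z ^ p ^ K‖ < r}) ⟨K, hzr⟩)

lemma mahlerExtension_of_norm_lt {z : ℂ} (hz : ‖z‖ < r) : mahlerExtension p r M C F z = F z := by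
  rw [mahlerExtension, escapeIndex, Nat.sInf_eq_zero.2 (Or.inl (by simpa using hz))]
  rfl

lemma mahlerExtension_apply (hp : 2 ≤ p) (hr₀ : 0 < r) (hr : r ≤ 1) (hS : ∀ z ∈ S, z ^ p ∈ S)
    (hF : ∀ z ∈ S, ‖z‖ < r → F z = M z * F (z ^ p) * C) {z : ℂ} (hz : z ∈ S) (hz₁ : ‖z‖ < 1) :
    mahlerExtension p r M C F z = M z * mahlerExtension p r M C F (z ^ p) * C := by
  obtain ⟨K, hK⟩ := exists_norm_pow_pow_lt hp hz₁ hr₀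
  have hK₁ : ‖z ^ p ^ (K + 1)‖ < r := norm_pow_pow_lt_of_le (by omega) hr K.le_succ hK
  rw [mahlerExtension_eq_mahlerIter (by omega) hr hS hF hz hK₁,
    mahlerExtension_eq_mahlerIter (by omega) hr hS hF (hS z hz) (by rwa [← pow_mul, ← pow_succ'])]
  rfl

end Extension

section MatrixExtension

variable {ι : Type*} [Fintype ι] {p : ℕ} {M F : ℂ → Matrix ι ι ℂ} {C : Matrix ι ι ℂ} {r : ℝ}
  {S : Set ℂ}

lemma meromorphicAt_mahlerIter_apply (hM : ∀ x i j, MeromorphicAt (fun z => M z i j) x)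
    (hF : ∀ x ∈ ball (0 : ℂ) r, ∀ i j, MeromorphicAt (fun z => F z i j) x) (K : ℕ) :
    ∀ x : ℂ, ‖x ^ p ^ K‖ < r → ∀ i j, MeromorphicAt (fun z => mahlerIter p M C F K z i j) x := by
  induction K with
  | zero => exact fun x hx => hF x (mem_ball_zero_iff.2 (by simpa using hx))
  | succ K ih =>
    intro x hx
    have hcomp : ∀ i j, MeromorphicAt (fun z => mahlerIter p M C F K (z ^ p) i j) x := fun i j =>
      (ih (x ^ p) (by rwa [← pow_mul, ← pow_succ']) i j).comp_analyticAt (g := (· ^ p))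
        (by fun_prop)
    exact meromorphicAt_matrix_mul_apply (meromorphicAt_matrix_mul_apply (hM x) hcomp)
      fun _ _ => MeromorphicAt.const _ x

lemma meromorphicOn_mahlerExtension_apply (hp : 2 ≤ p) (hr₀ : 0 < r) (hr : r ≤ 1)
    (hS : ∀ z ∈ S, z ^ p ∈ S) (hFS : ∀ z ∈ S, ‖z‖ < r → F z = M z * F (z ^ p) * C)
    (hS₁ : ∀ x ∈ ball (0 : ℂ) 1, ∀ᶠ z in 𝓝[≠] x, z ∈ S)
    (hM : ∀ x i j, MeromorphicAt (fun z => M z i j) x)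
    (hF : ∀ x ∈ ball (0 : ℂ) r, ∀ i j, MeromorphicAt (fun z => F z i j) x) (i j : ι) :
    MeromorphicOn (fun z => mahlerExtension p r M C F z i j) (ball 0 1) := by
  intro x hx
  obtain ⟨K, hK⟩ := exists_norm_pow_pow_lt hp (mem_ball_zero_iff.1 hx) hr₀
  have hnear : ∀ᶠ z in 𝓝[≠] x, ‖z ^ p ^ K‖ < r := nhdsWithin_le_nhds
    ((continuous_pow _).norm.continuousAt.eventually_lt continuousAt_const hK)
  refine (meromorphicAt_mahlerIter_apply (C := C) hM hF K x hK i j).congr ?_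
  filter_upwards [hS₁ x hx, hnear] with z hz hzK
  rw [mahlerExtension_eq_mahlerIter (by omega) hr hS hFS hz hzK]

end MatrixExtension

section Rational

variable {ι : Type*} [Fintype ι] [DecidableEq ι] {p : ℕ} {A : Matrix ι ι (RatFunc ℂ)}

def regularOrbitSet (p : ℕ) (A : Matrix ι ι (RatFunc ℂ)) : Set ℂ :=
  {z | z ≠ 0 ∧ ∀ i j k, (A i j).denom.eval (z ^ p ^ k) ≠ 0 ∧ (A⁻¹ i j).denom.eval (z ^ p ^ k) ≠ 0}

lemma pow_mem_regularOrbitSet {z : ℂ} (hz : z ∈ regularOrbitSet p A) :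
    z ^ p ∈ regularOrbitSet p A :=
  ⟨pow_ne_zero p hz.1, fun i j k => by simpa only [← pow_mul, ← pow_succ'] using hz.2 i j (k + 1)⟩

lemma eventually_mem_regularOrbitSet (hp : 2 ≤ p) {x : ℂ} (hx : ‖x‖ < 1) :
    ∀ᶠ z in 𝓝[≠] x, z ∈ regularOrbitSet p A := by
  have hne : ∀ᶠ z in 𝓝[≠] x, z ≠ 0 := by
    simpa using Polynomial.eventually_eval_ne_zero_nhdsNE Polynomial.X_ne_zero x
  have hden : ∀ i j, ∀ᶠ z in 𝓝[≠] x, ∀ k,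
      (A i j).denom.eval (z ^ p ^ k) ≠ 0 ∧ (A⁻¹ i j).denom.eval (z ^ p ^ k) ≠ 0 := fun i j =>
    ((eventually_forall_eval_pow_pow_ne_zero hp (A i j).denom_ne_zero hx).and
      (eventually_forall_eval_pow_pow_ne_zero hp (A⁻¹ i j).denom_ne_zero hx)).mono
      fun _ hz k => ⟨hz.1 k, hz.2 k⟩
  exact hne.and (eventually_all.2 fun i => eventually_all.2 (hden i))

lemma map_ratEval_mul_eq_one (hA : IsUnit A.det) {z : ℂ} (hz : z ∈ regularOrbitSet p A) :
    A⁻¹.map (ratEval · z) * A.map (ratEval · z) = 1 ∧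
      A.map (ratEval · z) * A⁻¹.map (ratEval · z) = 1 := by
  have h := map_ratEval_inv_mul hA (fun i j => by simpa using (hz.2 i j 0).1)
    (fun i j => by simpa using (hz.2 i j 0).2)
  exact ⟨h, mul_eq_one_comm.1 h⟩

theorem exists_meromorphic_extension (hp : 2 ≤ p) (hA : IsUnit A.det) {C : Matrix ι ι ℂ}
    {F : ℂ → Matrix ι ι ℂ} {r : ℝ} (hr₀ : 0 < r) (hr : r ≤ 1)
    (hFm : ∀ x ∈ ball (0 : ℂ) r, ∀ i j, MeromorphicAt (fun z => F z i j) x)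
    (hFeq : ∀ z ∈ ball (0 : ℂ) r, z ≠ 0 → A.map (ratEval · z) * F z = F (z ^ p) * C) :
    ∃ F₀ : ℂ → Matrix ι ι ℂ, (∀ i j, MeromorphicOn (fun z => F₀ z i j) (ball 0 1)) ∧
      Set.EqOn F₀ F (ball 0 r) ∧
      ∀ z ∈ ball (0 : ℂ) 1, (∀ i j, (A i j).denom.eval z ≠ 0) → ContinuousAt F₀ z →
        ContinuousAt F₀ (z ^ p) → A.map (ratEval · z) * F₀ z = F₀ (z ^ p) * C := by
  set S := regularOrbitSet p A
  set M : ℂ → Matrix ι ι ℂ := fun z => A⁻¹.map (ratEval · z)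
  have hS : ∀ z ∈ S, z ^ p ∈ S := fun z hz => pow_mem_regularOrbitSet hz
  have hFS : ∀ z ∈ S, ‖z‖ < r → F z = M z * F (z ^ p) * C := fun z hz hzr => by
    rw [mul_assoc, ← hFeq z (mem_ball_zero_iff.2 hzr) hz.1, ← mul_assoc,
      (map_ratEval_mul_eq_one hA hz).1, one_mul]
  have hM : ∀ x i j, MeromorphicAt (fun z => M z i j) x := fun x i j => meromorphicAt_ratEval _ x
  refine ⟨mahlerExtension p r M C F, meromorphicOn_mahlerExtension_apply hp hr₀ hr hS hFS
    (fun x hx => eventually_mem_regularOrbitSet hp (mem_ball_zero_iff.1 hx)) hM hFm,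
    fun z hz => mahlerExtension_of_norm_lt (mem_ball_zero_iff.1 hz), fun z hz hreg hc hcp => ?_⟩
  have hL : ContinuousAt (fun w => A.map (ratEval · w) * mahlerExtension p r M C F w) z :=
    (continuousAt_matrix fun i j => continuousAt_ratEval (hreg i j)).mul hc
  have hR : ContinuousAt (fun w => mahlerExtension p r M C F (w ^ p) * C) z :=
    (hcp.comp_of_eq (continuous_pow p).continuousAt rfl).mul continuousAt_const
  refine ((hL.eventuallyEq_nhds_iff_eventuallyEq_nhdsNE hR).1 ?_).eq_of_nhds
  filter_upwards [eventually_mem_regularOrbitSet (A := A) hp (mem_ball_zero_iff.1 hz),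
    nhdsWithin_le_nhds (isOpen_ball.mem_nhds hz)] with w hw hw₁
  rw [mahlerExtension_apply hp hr₀ hr hS hFS hw (mem_ball_zero_iff.1 hw₁), ← mul_assoc, ← mul_assoc,
    (map_ratEval_mul_eq_one hA hw).2, one_mul]

end Rational

section LocalSolution

variable {ι : Type*} [Fintype ι] [DecidableEq ι]

theorem exists_local_solution_of_regularSingular {p : ℕ} (hp : 2 ≤ p)
    {A T B : ℂ → Matrix ι ι ℂ} (hT : ∀ i j, MeromorphicAt (fun z => T z i j) 0)
    (hTdet : ∃ᶠ z in 𝓝[≠] 0, (T z).det ≠ 0)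
    (hB : ∀ i j, AnalyticAt ℂ (fun z => B z i j) 0) (hB0 : IsUnit (B 0).det)
    (hATB : ∀ᶠ z in 𝓝[≠] 0, A z * T z = T (z ^ p) * B z) :
    ∃ r > 0, r ≤ 1 ∧ ∃ F : ℂ → Matrix ι ι ℂ,
      (∀ x ∈ ball (0 : ℂ) r, ∀ i j, MeromorphicAt (fun z => F z i j) x) ∧
      (∀ z ∈ ball (0 : ℂ) r, z ≠ 0 → A z * F z = F (z ^ p) * B 0) ∧
      ∃ᶠ z in 𝓝[≠] 0, (∀ i j, AnalyticAt ℂ (fun w => F w i j) z) ∧ (F z).det ≠ 0 := by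
  obtain ⟨r₀, hr₀, Ψ, hΨ, hΨ0, hΨeq⟩ := exists_matrix_gauge_to_constant hp hB hB0
  have hTan : ∀ᶠ z in 𝓝[≠] 0, ∀ i j, AnalyticAt ℂ (fun w => T w i j) z :=
    eventually_all.2 fun i => eventually_all.2 fun j => (hT i j).eventually_analyticAt
  obtain ⟨s, hs, hloc⟩ :=
    Metric.eventually_nhds_iff_ball.1 (eventually_nhdsWithin_iff.1 (hATB.and hTan))
  have hΨdet : ∀ᶠ z in 𝓝 (0 : ℂ), (Ψ z).det ≠ 0 :=
    ((continuous_id.matrix_det.continuousAt.comp (continuousAt_matrix fun i j =>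
      (hΨ 0 (mem_ball_self hr₀) i j).continuousAt)).eventually_ne (by simp [hΨ0]))
  have hsub₀ : ball (0 : ℂ) (min (min r₀ s) 1) ⊆ ball 0 r₀ :=
    ball_subset_ball ((min_le_left _ _).trans (min_le_left _ _))
  have hsub : ball (0 : ℂ) (min (min r₀ s) 1) ⊆ ball 0 s :=
    ball_subset_ball ((min_le_left _ _).trans (min_le_right _ _))
  refine ⟨min (min r₀ s) 1, by positivity, min_le_right _ _, fun z => T z * Ψ z,
    fun x hx => ?_, fun z hz hz0 => ?_, ?_⟩
  · refine meromorphicAt_matrix_mul_apply ?_ fun i j => (hΨ x (hsub₀ hx) i j).meromorphicAt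
    rcases eq_or_ne x 0 with rfl | hx0
    · exact hT
    · exact fun i j => ((hloc x (hsub hx) hx0).2 i j).meromorphicAt
  · rw [← mul_assoc, (hloc z (hsub hz) hz0).1, mul_assoc, hΨeq z (hsub₀ hz), mul_assoc]
  · refine (hTdet.and_eventually (hTan.and (nhdsWithin_le_nhds
      (hΨdet.and (ball_mem_nhds 0 hr₀))))).mono fun z ⟨hTz, hTanz, hΨz, hz⟩ => ⟨?_, ?_⟩
    · exact analyticAt_matrix_mul_apply hTanz fun i j => hΨ z hz i j
    · rw [Matrix.det_mul]
      exact mul_ne_zero hTz hΨz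

end LocalSolution

/-- Let `p ≥ 2` and let `A ∈ GLₙ(ℂ(z))` be such that the Mahler
system `φ_p(Y) = AY` is regular singular at `0`: there is a matrix `T` of germs of
meromorphic functions at `0`, with determinant not identically zero, such that
`T(z^p)⁻¹·A(z)·T(z)` is regular at `0` (i.e. `A(z)·T(z) = T(z^p)·B(z)` near `0` for
some `B` holomorphic at `0` with `B(0)` invertible). Then there are a matrix `F₀` of
meromorphic functions on the open unit disk with determinant not identically zero and
a constant matrix `A₀ ∈ GLₙ(ℂ)` with `A(z)·F₀(z) = F₀(z^p)·A₀` on `D(0,1)`. -/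
theorem mahler_regular_singular_at_zero_constant_form
    (p n : ℕ) (hp : 2 ≤ p)
    (A : Matrix (Fin n) (Fin n) (RatFunc ℂ))
    (hAdet : A.det ≠ 0)
    (hrs : ∃ T : Matrix (Fin n) (Fin n) (ℂ → ℂ),
      (∀ i j, MeromorphicAt (T i j) 0) ∧
      (∃ᶠ z in 𝓝[≠] (0 : ℂ), (Matrix.of fun i j => T i j z).det ≠ 0) ∧
      ∃ B : Matrix (Fin n) (Fin n) (ℂ → ℂ),
        (∀ i j, AnalyticAt ℂ (B i j) 0) ∧
        IsUnit (Matrix.of fun i j => B i j 0).det ∧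
        ∀ᶠ z in 𝓝[≠] (0 : ℂ),
          (Matrix.of fun i j => ratEval (A i j) z) * (Matrix.of fun i j => T i j z)
            = (Matrix.of fun i j => T i j (z ^ p)) * (Matrix.of fun i j => B i j z)) :
    ∃ F₀ : Matrix (Fin n) (Fin n) (ℂ → ℂ),
      (∀ i j, MeromorphicOn (F₀ i j) (ball (0 : ℂ) 1)) ∧
      (∃ z ∈ ball (0 : ℂ) 1, (∀ i j, AnalyticAt ℂ (F₀ i j) z) ∧
        (Matrix.of fun i j => F₀ i j z).det ≠ 0) ∧
      ∃ A₀ : Matrix (Fin n) (Fin n) ℂ, IsUnit A₀.det ∧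
        ∀ z ∈ ball (0 : ℂ) 1,
          (∀ i j, Polynomial.eval z (A i j).denom ≠ 0) →
          (∀ i j, AnalyticAt ℂ (F₀ i j) z) →
          (∀ i j, AnalyticAt ℂ (F₀ i j) (z ^ p)) →
          (Matrix.of fun i j => ratEval (A i j) z) * (Matrix.of fun i j => F₀ i j z)
            = (Matrix.of fun i j => F₀ i j (z ^ p)) * A₀ := by
  obtain ⟨T, hT, hTdet, B, hB, hB0, hATB⟩ := hrs
  obtain ⟨r, hr, hr₁, F, hFm, hFeq, hFdet⟩ := exists_local_solution_of_regularSingular hp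
    (A := fun z => Matrix.of fun i j => ratEval (A i j) z)
    (T := fun z => Matrix.of fun i j => T i j z)
    (B := fun z => Matrix.of fun i j => B i j z) hT hTdet hB hB0 hATB
  obtain ⟨F₀, hF₀m, hF₀F, hF₀eq⟩ :=
    exists_meromorphic_extension hp (isUnit_iff_ne_zero.2 hAdet) hr hr₁ hFm hFeq
  obtain ⟨z₀, ⟨hFan, hFdet⟩, hz₀⟩ :=
    (hFdet.and_eventually (nhdsWithin_le_nhds (ball_mem_nhds 0 hr))).exists
  have hF₀F' : F =ᶠ[𝓝 z₀] F₀ := (hF₀F.eventuallyEq_of_mem (isOpen_ball.mem_nhds hz₀)).symm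
  refine ⟨Matrix.of fun i j z => F₀ z i j, hF₀m, ⟨z₀, ball_subset_ball hr₁ hz₀,
    fun i j => (hFan i j).congr (hF₀F'.fun_comp (· i j)), ?_⟩, _, hB0, fun z hz hreg hFz hFzp => ?_⟩
  · change (F₀ z₀).det ≠ 0
    rwa [hF₀F hz₀]
  · exact hF₀eq z hz hreg (continuousAt_matrix fun i j => (hFz i j).continuousAt)
      (continuousAt_matrix fun i j => (hFzp i j).continuousAt)
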